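/- (Remark 2: singularity of the BPSK ISAC FIM due to Doppler–data coupling.) Let v be the complex column vector indexed by (Fin L) ⊕ (Fin L) ⊕ (Fin 1) ⊕ (Fin L) whose entry at the first coordinate of the second group (the f_{d1} Doppler coordinate) is 1, whose entry at the unique coordinate of the third group (the BPSK data-phase coordinate φ_bpsk) is −1, and which is zero elsewhere. Then J_bpsk · v = 0. Consequently, for EVERY square complex matrix M indexed by (Fin L) ⊕ (Fin N_f × Fin L) ⊕ (Fin L), the matrix J_bpskᵀ · M · J_bpsk is not invertible (v is a nonzero vector in its kernel); only the sum of the Doppler shift and the data-phase component is identifiable. -/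
import Mathlib


open Matrix

noncomputable section

/-- The matrix `H`: first column all ones, agreeing with the identity elsewhere. -/
def Hmat (L : ℕ) : Matrix (Fin L) (Fin L) ℂ :=
  Matrix.of fun i j => if j.val = 0 ∨ i = j then 1 else 0

/-- The all-ones column vector `E` of length `L`. -/
def Emat (L : ℕ) : Matrix (Fin L) (Fin 1) ℂ :=
  Matrix.of fun _ _ => 1

/-- The Jacobian matrix of the BPSK ISAC case: row blocks `[H, 0, 0, 0]` for the delays,
`[0, (2πκT_f)·H, (2πκT_f)·E, 0]` for the phases, `[0, 0, 0, I_L]` for the amplitudes. -/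
def Jbpsk (L Nf : ℕ) (Tf : ℝ) :
    Matrix (Fin L ⊕ (Fin Nf × Fin L) ⊕ Fin L) (Fin L ⊕ Fin L ⊕ Fin 1 ⊕ Fin L) ℂ :=
  Matrix.of fun i j =>
    match i, j with
    | Sum.inl a, Sum.inl b => Hmat L a b
    | Sum.inr (Sum.inl (κ, a)), Sum.inr (Sum.inl b) =>
        ((2 * Real.pi * (κ.1 : ℝ) * Tf : ℝ) : ℂ) * Hmat L a b
    | Sum.inr (Sum.inl (κ, a)), Sum.inr (Sum.inr (Sum.inl b)) =>
        ((2 * Real.pi * (κ.1 : ℝ) * Tf : ℝ) : ℂ) * Emat L a b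
    | Sum.inr (Sum.inr a), Sum.inr (Sum.inr (Sum.inr b)) => (1 : Matrix (Fin L) (Fin L) ℂ) a b
    | _, _ => 0

/-- The coupling direction: `1` on the `f_{d1}` Doppler coordinate, `−1` on the BPSK
data-phase coordinate. -/
def vbpsk (L : ℕ) : (Fin L ⊕ Fin L ⊕ Fin 1 ⊕ Fin L) → ℂ :=
  Sum.elim (fun _ => 0)
    (Sum.elim (fun a => if a.val = 0 then 1 else 0)
      (Sum.elim (fun _ => -1) (fun _ => 0)))

/-- Remark 2: singularity of the BPSK ISAC FIM due to Doppler–data coupling. -/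
theorem bpsk_fim_singular (L Nf : ℕ) (hL : 1 ≤ L) (Tf : ℝ) :
    (Jbpsk L Nf Tf).mulVec (vbpsk L) = 0 ∧ vbpsk L ≠ 0 ∧
      ∀ M : Matrix (Fin L ⊕ (Fin Nf × Fin L) ⊕ Fin L) (Fin L ⊕ (Fin Nf × Fin L) ⊕ Fin L) ℂ,
        ¬ IsUnit ((Jbpsk L Nf Tf)ᵀ * M * Jbpsk L Nf Tf) := by
  have hJv : (Jbpsk L Nf Tf).mulVec (vbpsk L) = 0 := by
    funext i
    simp only [mulVec, dotProduct, Fintype.sum_sum_type, Pi.zero_apply]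
    rcases i with a | i
    · simp [Jbpsk, vbpsk]
    rcases i with ⟨κ, a⟩ | a
    · have h1 : ∀ b : Fin L,
        Jbpsk L Nf Tf (Sum.inr (Sum.inl (κ, a))) (Sum.inr (Sum.inl b)) *
          vbpsk L (Sum.inr (Sum.inl b))
          = if b = (⟨0, hL⟩ : Fin L) then ((2 * Real.pi * (κ.1 : ℝ) * Tf : ℝ) : ℂ) else 0 := by
        intro b
        have : (b.val = 0) ↔ (b = (⟨0, hL⟩ : Fin L)) := by
          constructor <;> intro h <;> [exact Fin.ext h; exact congrArg Fin.val h]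
        simp only [Jbpsk, vbpsk, Hmat, Matrix.of_apply, Sum.elim_inr, Sum.elim_inl]
        by_cases hb : b = (⟨0, hL⟩ : Fin L) <;> simp [hb, this]
      rw [Finset.sum_congr rfl (fun b _ => h1 b), Finset.sum_ite_eq' Finset.univ]
      simp [Jbpsk, vbpsk, Emat, Fin.sum_univ_one]
    · simp [Jbpsk, vbpsk]
  have hv : vbpsk L ≠ 0 := by
    intro h
    have := congrFun h (Sum.inr (Sum.inl (⟨0, hL⟩ : Fin L)))
    simp [vbpsk] at this
  refine ⟨hJv, hv, fun M hU => ?_⟩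
  have hAv : ((Jbpsk L Nf Tf)ᵀ * M * Jbpsk L Nf Tf).mulVec (vbpsk L) = 0 := by
    rw [← Matrix.mulVec_mulVec, hJv, Matrix.mulVec_zero]
  have : vbpsk L = 0 := by
    have h1 := congrArg (fun w => (((Jbpsk L Nf Tf)ᵀ * M * Jbpsk L Nf Tf)⁻¹).mulVec w) hAv
    simpa [Matrix.mulVec_mulVec, Matrix.nonsing_inv_mul _ ((Matrix.isUnit_iff_isUnit_det _).mp hU)]
      using h1
  exact hv this
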